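/- The center K := Z(H) of the ℚ-algebra H is a reduced ring (it contains no nonzero nilpotent element); consequently K is isomorphic as a ℚ-algebra to a finite product of number fields. -/

import Mathlib

open scoped TensorProduct

noncomputable section

/-- Complex conjugation on `ℂ` as a `ℚ`-algebra homomorphism. -/
def conjQAlg : ℂ →ₐ[ℚ] ℂ := (Complex.conjAe.restrictScalars ℚ).toAlgHom

variable (H : Type) [Ring H] [Algebra ℚ H] [FiniteDimensional ℚ H]

/-- The conjugate-linear involution of `H_ℂ = ℂ ⊗[ℚ] H` fixing `H`. -/
def sigmaC : ℂ ⊗[ℚ] H →ₗ[ℚ] ℂ ⊗[ℚ] H :=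
  (Algebra.TensorProduct.map conjQAlg (AlgHom.id ℚ H)).toLinearMap

/-- The inclusion of `H` into `H_ℂ = ℂ ⊗[ℚ] H`. -/
def inclH : H →ₐ[ℚ] ℂ ⊗[ℚ] H := Algebra.TensorProduct.includeRight

/-- The data of a polarized weight 2 Hodge structure on a finite-dimensional `ℚ`-algebra `H`,
compatible with the ring structure:
(i) a Hodge decomposition `H_ℂ = H^{2,0} ⊕ H^{1,1} ⊕ H^{0,2}` with `σ(H^{2,0}) = H^{0,2}`,
`σ(H^{1,1}) = H^{1,1}`;
(ii) a polarization: a symmetric `ℚ`-bilinear form `B` on `H` with `ℂ`-bilinear extension `BC`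
to `H_ℂ`, whose associated Hermitian pairing `h(α,β) := BC α (σ β)` makes the Hodge pieces
pairwise orthogonal and is positive definite on `H^{2,0}`, `H^{0,2}` and negative definite on
`H^{1,1}`;
(iii) the product is a morphism of Hodge structures of bidegree `(-1,-1)`:
`H^{p,q}·H^{p',q'} ⊆ H^{p+p'-1,q+q'-1}`;
(iv) an adjunction `t`: a `ℚ`-linear involution with `t(ab) = t(b)t(a)`,
`⟨ab,c⟩ = ⟨b, t(a)c⟩` and `⟨ab,c⟩ = ⟨a, c·t(b)⟩`. -/
structure HodgeAlgebraData where
  H20 : Submodule ℂ (ℂ ⊗[ℚ] H)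
  H11 : Submodule ℂ (ℂ ⊗[ℚ] H)
  H02 : Submodule ℂ (ℂ ⊗[ℚ] H)
  sup_top : H20 ⊔ H11 ⊔ H02 = ⊤
  disj1 : H20 ⊓ (H11 ⊔ H02) = ⊥
  disj2 : H11 ⊓ H02 = ⊥
  sigma_20 : ∀ x ∈ H20, sigmaC H x ∈ H02
  sigma_02 : ∀ x ∈ H02, sigmaC H x ∈ H20
  sigma_11 : ∀ x ∈ H11, sigmaC H x ∈ H11
  B : H →ₗ[ℚ] H →ₗ[ℚ] ℚ
  B_symm : ∀ a b : H, B a b = B b a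
  BC : (ℂ ⊗[ℚ] H) →ₗ[ℂ] (ℂ ⊗[ℚ] H) →ₗ[ℂ] ℂ
  BC_extends : ∀ a b : H, BC (inclH H a) (inclH H b) = (B a b : ℂ)
  BC_symm : ∀ x y, BC x y = BC y x
  BC_conj : ∀ x y, BC (sigmaC H x) (sigmaC H y) = starRingEnd ℂ (BC x y)
  orth_20_11 : ∀ x ∈ H20, ∀ y ∈ H11, BC x (sigmaC H y) = 0
  orth_20_02 : ∀ x ∈ H20, ∀ y ∈ H02, BC x (sigmaC H y) = 0
  orth_11_02 : ∀ x ∈ H11, ∀ y ∈ H02, BC x (sigmaC H y) = 0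
  pos_20 : ∀ x ∈ H20, x ≠ 0 → 0 < (BC x (sigmaC H x)).re ∧ (BC x (sigmaC H x)).im = 0
  pos_02 : ∀ x ∈ H02, x ≠ 0 → 0 < (BC x (sigmaC H x)).re ∧ (BC x (sigmaC H x)).im = 0
  neg_11 : ∀ x ∈ H11, x ≠ 0 → (BC x (sigmaC H x)).re < 0 ∧ (BC x (sigmaC H x)).im = 0
  mul_20_20 : ∀ x ∈ H20, ∀ y ∈ H20, x * y = 0
  mul_20_11 : ∀ x ∈ H20, ∀ y ∈ H11, x * y ∈ H20
  mul_11_20 : ∀ x ∈ H11, ∀ y ∈ H20, x * y ∈ H20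
  mul_11_11 : ∀ x ∈ H11, ∀ y ∈ H11, x * y ∈ H11
  mul_20_02 : ∀ x ∈ H20, ∀ y ∈ H02, x * y ∈ H11
  mul_02_20 : ∀ x ∈ H02, ∀ y ∈ H20, x * y ∈ H11
  mul_02_02 : ∀ x ∈ H02, ∀ y ∈ H02, x * y = 0
  mul_11_02 : ∀ x ∈ H11, ∀ y ∈ H02, x * y ∈ H02
  mul_02_11 : ∀ x ∈ H02, ∀ y ∈ H11, x * y ∈ H02
  t : H →ₗ[ℚ] H
  t_invol : ∀ a : H, t (t a) = a
  t_mul : ∀ a b : H, t (a * b) = t b * t a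
  adj_left : ∀ a b c : H, B (a * b) c = B b (t a * c)
  adj_right : ∀ a b c : H, B (a * b) c = B a (c * t b)

variable {H}

/-- `W := H^{2,0}·H_ℂ`, the `ℂ`-linear span of all products `x·y` with `x ∈ H^{2,0}`,
`y ∈ H_ℂ`. -/
def HodgeAlgebraData.W (D : HodgeAlgebraData H) : Submodule ℂ (ℂ ⊗[ℚ] H) := D.H20 * ⊤

/-- `σ(W)`, the image of `W` under the conjugation `σ`, as a `ℚ`-subspace of `H_ℂ`. -/
def HodgeAlgebraData.sigmaW (D : HodgeAlgebraData H) : Submodule ℚ (ℂ ⊗[ℚ] H) :=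
  (D.W.restrictScalars ℚ).map (sigmaC H)

/-- The `ℂ`-linear extension of `t` to `H_ℂ`. -/
def HodgeAlgebraData.tC (D : HodgeAlgebraData H) : ℂ ⊗[ℚ] H →ₗ[ℂ] ℂ ⊗[ℚ] H :=
  LinearMap.baseChange ℂ D.t

/-!
The Hermitian form `h(x, y) = ⟨x, σ y⟩` makes left multiplication by `x` adjoint to left
multiplication by `x* = σ (t x)`; testing against `1 ∈ H^{1,1}` shows that `*` exchanges
`H^{2,0}` and `H^{0,2}` and preserves `H^{1,1}`. Since the product has bidegree `(-1,-1)`, the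
Hodge components of a central element are central. If `b` is of pure type, commutes with `b*`
and `b² = 0`, then `m = b* b ∈ H^{1,1}` is self-adjoint with `m² = 0`, so `h(m, m) = h(1, m²) = 0`
and `m = 0` by definiteness on `H^{1,1}`; then `h(b, b) = h(1, m) = 0` and `b = 0`. Applied to the
components of a central `z ∈ H` with `z² = 0` this gives `z = 0`. Finally, a reduced
finite-dimensional commutative `ℚ`-algebra is Artinian, hence the product of its residue fields,
which embed into `ℂ`.
-/

section HodgeAlgebra

variable {A : Type} [Ring A] [Algebra ℚ A]

theorem sigmaC_tmul (s : ℂ) (a : A) : sigmaC A (s ⊗ₜ a) = starRingEnd ℂ s ⊗ₜ a := rfl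

theorem sigmaC_mul (x y : ℂ ⊗[ℚ] A) : sigmaC A (x * y) = sigmaC A x * sigmaC A y :=
  map_mul (Algebra.TensorProduct.map conjQAlg (AlgHom.id ℚ A)) x y

theorem sigmaC_sigmaC (x : ℂ ⊗[ℚ] A) : sigmaC A (sigmaC A x) = x := by
  induction x using TensorProduct.induction_on with
  | zero => simp
  | tmul s a => simp [sigmaC_tmul]
  | add x y hx hy => simp [hx, hy]

theorem inclH_injective : Function.Injective (inclH A) :=
  Algebra.TensorProduct.includeRight_injective (algebraMap ℚ ℂ).injective

theorem inclH_induction {p : ℂ ⊗[ℚ] A → Prop} (zero : p 0) (incl : ∀ a, p (inclH A a))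
    (add : ∀ x y, p x → p y → p (x + y)) (smul : ∀ (s : ℂ) x, p x → p (s • x)) (x : ℂ ⊗[ℚ] A) :
    p x := by
  induction x using TensorProduct.induction_on with
  | zero => exact zero
  | tmul s a =>
    have h := smul s _ (incl a)
    rwa [inclH, Algebra.TensorProduct.includeRight_apply, TensorProduct.smul_tmul', smul_eq_mul,
      mul_one] at h
  | add x y hx hy => exact add x y hx hy

theorem inclH_mem_center {z : A} (hz : z ∈ Set.center A) : inclH A z ∈ Set.center (ℂ ⊗[ℚ] A) := by
  refine Semigroup.mem_center_iff.mpr fun v ↦ ?_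
  induction v using inclH_induction with
  | zero => simp
  | incl a => rw [← map_mul, ← map_mul, Semigroup.mem_center_iff.mp hz a]
  | add x y hx hy => rw [add_mul, mul_add, hx, hy]
  | smul s x hx => rw [smul_mul_assoc, mul_smul_comm, hx]

namespace HodgeAlgebraData

variable (D : HodgeAlgebraData A)

theorem tC_inclH (a : A) : D.tC (inclH A a) = inclH A (D.t a) := rfl

theorem tC_tC (x : ℂ ⊗[ℚ] A) : D.tC (D.tC x) = x := by
  induction x using inclH_induction with
  | zero => simp
  | incl a => rw [tC_inclH, tC_inclH, D.t_invol]
  | add x y hx hy => rw [map_add, map_add, hx, hy]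
  | smul s x hx => rw [map_smul, map_smul, hx]

theorem tC_sigmaC (x : ℂ ⊗[ℚ] A) : D.tC (sigmaC A x) = sigmaC A (D.tC x) := by
  induction x using TensorProduct.induction_on with
  | zero => simp
  | tmul s a => rfl
  | add x y hx hy => rw [map_add, map_add, map_add, map_add, hx, hy]

theorem tC_mul (x y : ℂ ⊗[ℚ] A) : D.tC (x * y) = D.tC y * D.tC x := by
  induction x using inclH_induction with
  | zero => simp
  | add x x' hx hx' => rw [add_mul, map_add, hx, hx', map_add, mul_add]
  | smul s x hx => rw [smul_mul_assoc, map_smul, hx, map_smul, mul_smul_comm]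
  | incl a =>
    induction y using inclH_induction with
    | zero => simp
    | add y y' hy hy' => rw [mul_add, map_add, hy, hy', map_add, add_mul]
    | smul s y hy => rw [mul_smul_comm, map_smul, hy, map_smul, smul_mul_assoc]
    | incl b => rw [← map_mul, tC_inclH, tC_inclH, tC_inclH, D.t_mul, map_mul]

theorem BC_mul_left (x y z : ℂ ⊗[ℚ] A) : D.BC (x * y) z = D.BC y (D.tC x * z) := by
  induction x using inclH_induction with
  | zero => simp
  | add x x' hx hx' => simp [add_mul, hx, hx']
  | smul s x hx => simp [hx]
  | incl a =>
    induction y using inclH_induction with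
    | zero => simp
    | add y y' hy hy' => simp [mul_add, hy, hy']
    | smul s y hy => simp [hy]
    | incl c =>
      induction z using inclH_induction with
      | zero => simp
      | add z z' hz hz' => simp [mul_add, hz, hz']
      | smul s z hz => simp [hz]
      | incl b => rw [← map_mul, tC_inclH, ← map_mul, D.BC_extends, D.BC_extends, D.adj_left]

/-- The Hermitian form `h(x, y) = ⟨x, σ y⟩` of the polarization. -/
def herm (x y : ℂ ⊗[ℚ] A) : ℂ := D.BC x (sigmaC A y)

/-- `x* := σ (t x)`, the adjoint of left multiplication by `x` with respect to `herm`. -/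
def adj (x : ℂ ⊗[ℚ] A) : ℂ ⊗[ℚ] A := sigmaC A (D.tC x)

theorem adj_adj (x : ℂ ⊗[ℚ] A) : D.adj (D.adj x) = x := by
  rw [adj, adj, tC_sigmaC, sigmaC_sigmaC, tC_tC]

theorem adj_mul (x y : ℂ ⊗[ℚ] A) : D.adj (x * y) = D.adj y * D.adj x := by
  rw [adj, adj, adj, tC_mul, sigmaC_mul]

theorem herm_mul_left (x u y : ℂ ⊗[ℚ] A) : D.herm (x * u) y = D.herm u (D.adj x * y) := by
  rw [herm, herm, BC_mul_left, adj, sigmaC_mul, sigmaC_sigmaC]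

theorem herm_adj_eq_herm_mul_one (x u : ℂ ⊗[ℚ] A) : D.herm x (D.adj u) = D.herm (u * x) 1 := by
  rw [herm_mul_left, mul_one]

theorem herm_swap (x y : ℂ ⊗[ℚ] A) : D.herm y x = starRingEnd ℂ (D.herm x y) := by
  rw [herm, herm, D.BC_symm y, ← D.BC_conj, sigmaC_sigmaC]

theorem orth_11_20 {x y : ℂ ⊗[ℚ] A} (hx : x ∈ D.H11) (hy : y ∈ D.H20) : D.herm x y = 0 := by
  rw [herm_swap, herm, D.orth_20_11 y hy x hx, map_zero]

theorem orth_02_20 {x y : ℂ ⊗[ℚ] A} (hx : x ∈ D.H02) (hy : y ∈ D.H20) : D.herm x y = 0 := by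
  rw [herm_swap, herm, D.orth_20_02 y hy x hx, map_zero]

theorem orth_02_11 {x y : ℂ ⊗[ℚ] A} (hx : x ∈ D.H02) (hy : y ∈ D.H11) : D.herm x y = 0 := by
  rw [herm_swap, herm, D.orth_11_02 y hy x hx, map_zero]

theorem eq_zero_of_mem_H20_of_herm_self {x : ℂ ⊗[ℚ] A} (hx : x ∈ D.H20) (h : D.herm x x = 0) :
    x = 0 := by
  by_contra hne
  exact (D.pos_20 x hx hne).1.ne' (congrArg Complex.re h)

theorem eq_zero_of_mem_H11_of_herm_self {x : ℂ ⊗[ℚ] A} (hx : x ∈ D.H11) (h : D.herm x x = 0) :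
    x = 0 := by
  by_contra hne
  exact (D.neg_11 x hx hne).1.ne (congrArg Complex.re h)

theorem eq_zero_of_mem_H02_of_herm_self {x : ℂ ⊗[ℚ] A} (hx : x ∈ D.H02) (h : D.herm x x = 0) :
    x = 0 := by
  by_contra hne
  exact (D.pos_02 x hx hne).1.ne' (congrArg Complex.re h)

theorem exists_hodge_decomposition (x : ℂ ⊗[ℚ] A) :
    ∃ p ∈ D.H20, ∃ q ∈ D.H11, ∃ r ∈ D.H02, x = p + q + r := by
  obtain ⟨pq, hpq, r, hr, rfl⟩ := Submodule.mem_sup.mp (D.sup_top ▸ Submodule.mem_top (x := x))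
  obtain ⟨p, hp, q, hq, rfl⟩ := Submodule.mem_sup.mp hpq
  exact ⟨p, hp, q, hq, r, hr, rfl⟩

theorem hodge_decomposition_unique {p q r p' q' r' : ℂ ⊗[ℚ] A} (hp : p ∈ D.H20) (hq : q ∈ D.H11)
    (hr : r ∈ D.H02) (hp' : p' ∈ D.H20) (hq' : q' ∈ D.H11) (hr' : r' ∈ D.H02)
    (h : p + q + r = p' + q' + r') : p = p' ∧ q = q' ∧ r = r' := by
  have hpp : p - p' ∈ D.H20 ⊓ (D.H11 ⊔ D.H02) := by
    refine ⟨sub_mem hp hp', ?_⟩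
    have : p - p' = (q' - q) + (r' - r) := by
      rw [← sub_eq_zero] at h ⊢; rw [← h]; abel
    exact this ▸ Submodule.add_mem_sup (sub_mem hq' hq) (sub_mem hr' hr)
  rw [D.disj1, Submodule.mem_bot, sub_eq_zero] at hpp
  subst hpp
  have hqq : q - q' ∈ D.H11 ⊓ D.H02 := by
    refine ⟨sub_mem hq hq', ?_⟩
    have : q - q' = r' - r := by
      rw [← sub_eq_zero] at h ⊢; rw [← h]; abel
    exact this ▸ sub_mem hr' hr
  rw [D.disj2, Submodule.mem_bot, sub_eq_zero] at hqq
  subst hqq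
  exact ⟨rfl, rfl, by simpa using h⟩

theorem herm_components {p q r : ℂ ⊗[ℚ] A} (hp : p ∈ D.H20) (hq : q ∈ D.H11) (hr : r ∈ D.H02) :
    D.herm p (p + q + r) = D.herm p p ∧ D.herm q (p + q + r) = D.herm q q ∧
      D.herm r (p + q + r) = D.herm r r := by
  simp only [herm, map_add, D.orth_20_11 p hp q hq, D.orth_20_02 p hp r hr, D.orth_11_02 q hq r hr]
  refine ⟨by ring, ?_, ?_⟩
  · rw [← herm, D.orth_11_20 hq hp]; ring
  · rw [← herm, ← herm, D.orth_02_20 hr hp, D.orth_02_11 hr hq]; ring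

theorem one_mem_H11 : (1 : ℂ ⊗[ℚ] A) ∈ D.H11 := by
  obtain ⟨e, he, f, hf, g, hg, hone⟩ := D.exists_hodge_decomposition 1
  have hf_dec : 0 + f + 0 = e * f + f * f + g * f := by
    rw [← add_mul, ← add_mul, ← hone, one_mul, zero_add, add_zero]
  obtain ⟨hef, -, hgf⟩ := D.hodge_decomposition_unique (zero_mem _) hf (zero_mem _)
    (D.mul_20_11 e he f hf) (D.mul_11_11 f hf f hf) (D.mul_02_11 g hg f hf) hf_dec
  have he_dec : e + 0 + 0 = e * f + e * g + 0 := by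
    conv_lhs => rw [← mul_one e, hone]
    rw [mul_add, mul_add, D.mul_20_20 e he e he]; abel
  have hg_dec : 0 + 0 + g = 0 + g * e + g * f := by
    conv_lhs => rw [← mul_one g, hone]
    rw [mul_add, mul_add, D.mul_02_02 g hg g hg]; abel
  obtain ⟨he0, -, -⟩ := D.hodge_decomposition_unique he (zero_mem _) (zero_mem _)
    (D.mul_20_11 e he f hf) (D.mul_20_02 e he g hg) (zero_mem _) he_dec
  obtain ⟨-, -, hg0⟩ := D.hodge_decomposition_unique (zero_mem _) (zero_mem _) hg
    (zero_mem _) (D.mul_02_20 g hg e he) (D.mul_02_11 g hg f hf) hg_dec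
  rw [hone, he0.trans hef.symm, hg0.trans hgf.symm, add_zero, zero_add]
  exact hf

theorem mem_H02_of_herm_eq_zero {w : ℂ ⊗[ℚ] A} (h20 : ∀ p ∈ D.H20, D.herm p w = 0)
    (h11 : ∀ q ∈ D.H11, D.herm q w = 0) : w ∈ D.H02 := by
  obtain ⟨p, hp, q, hq, r, hr, rfl⟩ := D.exists_hodge_decomposition w
  obtain ⟨hpw, hqw, -⟩ := D.herm_components hp hq hr
  rw [D.eq_zero_of_mem_H20_of_herm_self hp (hpw ▸ h20 p hp),
    D.eq_zero_of_mem_H11_of_herm_self hq (hqw ▸ h11 q hq), zero_add, zero_add]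
  exact hr

theorem mem_H11_of_herm_eq_zero {w : ℂ ⊗[ℚ] A} (h20 : ∀ p ∈ D.H20, D.herm p w = 0)
    (h02 : ∀ r ∈ D.H02, D.herm r w = 0) : w ∈ D.H11 := by
  obtain ⟨p, hp, q, hq, r, hr, rfl⟩ := D.exists_hodge_decomposition w
  obtain ⟨hpw, -, hrw⟩ := D.herm_components hp hq hr
  rw [D.eq_zero_of_mem_H20_of_herm_self hp (hpw ▸ h20 p hp),
    D.eq_zero_of_mem_H02_of_herm_self hr (hrw ▸ h02 r hr), zero_add, add_zero]
  exact hq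

theorem mem_H20_of_herm_eq_zero {w : ℂ ⊗[ℚ] A} (h11 : ∀ q ∈ D.H11, D.herm q w = 0)
    (h02 : ∀ r ∈ D.H02, D.herm r w = 0) : w ∈ D.H20 := by
  obtain ⟨p, hp, q, hq, r, hr, rfl⟩ := D.exists_hodge_decomposition w
  obtain ⟨-, hqw, hrw⟩ := D.herm_components hp hq hr
  rw [D.eq_zero_of_mem_H11_of_herm_self hq (hqw ▸ h11 q hq),
    D.eq_zero_of_mem_H02_of_herm_self hr (hrw ▸ h02 r hr), add_zero, add_zero]
  exact hp

theorem adj_mem_H02 {u : ℂ ⊗[ℚ] A} (hu : u ∈ D.H20) : D.adj u ∈ D.H02 := by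
  refine D.mem_H02_of_herm_eq_zero (fun p hp ↦ ?_) (fun q hq ↦ ?_) <;>
    rw [herm_adj_eq_herm_mul_one]
  · simp [D.mul_20_20 u hu p hp, herm]
  · exact D.orth_20_11 _ (D.mul_20_11 u hu q hq) 1 D.one_mem_H11

theorem adj_mem_H11 {u : ℂ ⊗[ℚ] A} (hu : u ∈ D.H11) : D.adj u ∈ D.H11 := by
  refine D.mem_H11_of_herm_eq_zero (fun p hp ↦ ?_) (fun r hr ↦ ?_) <;>
    rw [herm_adj_eq_herm_mul_one]
  · exact D.orth_20_11 _ (D.mul_11_20 u hu p hp) 1 D.one_mem_H11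
  · exact D.orth_02_11 (D.mul_11_02 u hu r hr) D.one_mem_H11

theorem adj_mem_H20 {u : ℂ ⊗[ℚ] A} (hu : u ∈ D.H02) : D.adj u ∈ D.H20 := by
  refine D.mem_H20_of_herm_eq_zero (fun q hq ↦ ?_) (fun r hr ↦ ?_) <;>
    rw [herm_adj_eq_herm_mul_one]
  · exact D.orth_02_11 (D.mul_02_11 u hu q hq) D.one_mem_H11
  · simp [D.mul_02_02 u hu r hr, herm]

def IsPureType (x : ℂ ⊗[ℚ] A) : Prop := x ∈ D.H20 ∨ x ∈ D.H11 ∨ x ∈ D.H02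

theorem IsPureType.eq_zero_of_herm_self {D : HodgeAlgebraData A} {x : ℂ ⊗[ℚ] A}
    (hx : D.IsPureType x) (h : D.herm x x = 0) : x = 0 := by
  rcases hx with hx | hx | hx
  · exact D.eq_zero_of_mem_H20_of_herm_self hx h
  · exact D.eq_zero_of_mem_H11_of_herm_self hx h
  · exact D.eq_zero_of_mem_H02_of_herm_self hx h

theorem IsPureType.adj_mul_self_mem_H11 {D : HodgeAlgebraData A} {x : ℂ ⊗[ℚ] A}
    (hx : D.IsPureType x) : D.adj x * x ∈ D.H11 := by
  rcases hx with hx | hx | hx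
  · exact D.mul_02_20 _ (D.adj_mem_H02 hx) x hx
  · exact D.mul_11_11 _ (D.adj_mem_H11 hx) x hx
  · exact D.mul_20_02 _ (D.adj_mem_H20 hx) x hx

theorem IsPureType.eq_zero_of_commute_adj {D : HodgeAlgebraData A} {b : ℂ ⊗[ℚ] A}
    (hb : D.IsPureType b) (hcomm : Commute b (D.adj b)) (hbb : b * b = 0) : b = 0 := by
  set m := D.adj b * b with hm
  have hm_adj : D.adj m = m := by rw [adj_mul, adj_adj]
  have hmm : m * m = 0 := by
    rw [mul_assoc, ← mul_assoc b, hcomm.eq, mul_assoc, hbb, mul_zero, mul_zero]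
  have hm0 : m = 0 := by
    refine D.eq_zero_of_mem_H11_of_herm_self hb.adj_mul_self_mem_H11 ?_
    simpa [hm_adj, hmm, herm] using D.herm_mul_left m 1 m
  refine hb.eq_zero_of_herm_self ?_
  simpa [← hm, hm0, herm] using D.herm_mul_left b 1 b

theorem commute_hodge_components {ζ a b c u : ℂ ⊗[ℚ] A} (ha : a ∈ D.H20) (hb : b ∈ D.H11)
    (hc : c ∈ D.H02) (hζ : ζ = a + b + c) (hζu : Commute ζ u) (hu : D.IsPureType u) :
    Commute a u ∧ Commute b u ∧ Commute c u := by
  have h : a * u + b * u + c * u = u * a + u * b + u * c := by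
    rw [← add_mul, ← add_mul, ← mul_add, ← mul_add, ← hζ, hζu.eq]
  rcases hu with hu | hu | hu
  · rw [D.mul_20_20 a ha u hu, D.mul_20_20 u hu a ha, zero_add, zero_add,
      ← add_zero (b * u + c * u), ← add_zero (u * b + u * c)] at h
    obtain ⟨hbu, hcu, -⟩ := D.hodge_decomposition_unique (D.mul_11_20 b hb u hu)
      (D.mul_02_20 c hc u hu) (zero_mem _) (D.mul_20_11 u hu b hb) (D.mul_20_02 u hu c hc)
      (zero_mem _) h
    exact ⟨by rw [Commute, SemiconjBy, D.mul_20_20 a ha u hu, D.mul_20_20 u hu a ha], hbu, hcu⟩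
  · exact D.hodge_decomposition_unique (D.mul_20_11 a ha u hu) (D.mul_11_11 b hb u hu)
      (D.mul_02_11 c hc u hu) (D.mul_11_20 u hu a ha) (D.mul_11_11 u hu b hb)
      (D.mul_11_02 u hu c hc) h
  · rw [D.mul_02_02 c hc u hu, D.mul_02_02 u hu c hc, add_zero, add_zero,
      ← zero_add (a * u + b * u), ← zero_add (u * a + u * b), ← add_assoc, ← add_assoc] at h
    obtain ⟨-, hau, hbu⟩ := D.hodge_decomposition_unique (zero_mem _) (D.mul_20_02 a ha u hu)
      (D.mul_11_02 b hb u hu) (zero_mem _) (D.mul_02_20 u hu a ha) (D.mul_02_11 u hu b hb) h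
    exact ⟨hau, hbu, by rw [Commute, SemiconjBy, D.mul_02_02 c hc u hu, D.mul_02_02 u hu c hc]⟩

theorem hodge_components_mem_center {ζ a b c : ℂ ⊗[ℚ] A} (ha : a ∈ D.H20) (hb : b ∈ D.H11)
    (hc : c ∈ D.H02) (hζ : ζ = a + b + c) (hζc : ζ ∈ Set.center (ℂ ⊗[ℚ] A)) :
    a ∈ Set.center (ℂ ⊗[ℚ] A) ∧ b ∈ Set.center (ℂ ⊗[ℚ] A) ∧ c ∈ Set.center (ℂ ⊗[ℚ] A) := by
  have hcomm (u : ℂ ⊗[ℚ] A) : Commute a u ∧ Commute b u ∧ Commute c u := by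
    obtain ⟨p, hp, q, hq, r, hr, rfl⟩ := D.exists_hodge_decomposition u
    have comm (x) (hx : D.IsPureType x) :=
      D.commute_hodge_components ha hb hc hζ (Semigroup.mem_center_iff.mp hζc x).symm hx
    obtain ⟨hap, hbp, hcp⟩ := comm p (Or.inl hp)
    obtain ⟨haq, hbq, hcq⟩ := comm q (Or.inr (Or.inl hq))
    obtain ⟨har, hbr, hcr⟩ := comm r (Or.inr (Or.inr hr))
    exact ⟨(hap.add_right haq).add_right har, (hbp.add_right hbq).add_right hbr,
      (hcp.add_right hcq).add_right hcr⟩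
  simp only [Semigroup.mem_center_iff]
  exact ⟨fun u ↦ (hcomm u).1.symm, fun u ↦ (hcomm u).2.1.symm, fun u ↦ (hcomm u).2.2.symm⟩

theorem eq_zero_of_mem_center_of_mul_self_eq_zero (D : HodgeAlgebraData A) {z : A}
    (hz : z ∈ Set.center A) (hzz : z * z = 0) : z = 0 := by
  obtain ⟨a, ha, b, hb, c, hc, hdec⟩ := D.exists_hodge_decomposition (inclH A z)
  have commute_adj (x : ℂ ⊗[ℚ] A) (hx : x ∈ Set.center (ℂ ⊗[ℚ] A)) : Commute x (D.adj x) :=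
    (Semigroup.mem_center_iff.mp hx _).symm
  obtain ⟨ha', hb', hc'⟩ := D.hodge_components_mem_center ha hb hc hdec (inclH_mem_center hz)
  have ha0 : a = 0 := IsPureType.eq_zero_of_commute_adj (Or.inl ha) (commute_adj a ha')
    (D.mul_20_20 a ha a ha)
  have hc0 : c = 0 := IsPureType.eq_zero_of_commute_adj (Or.inr (Or.inr hc)) (commute_adj c hc')
    (D.mul_02_02 c hc c hc)
  rw [ha0, hc0, zero_add, add_zero] at hdec
  have hb0 : b = 0 := IsPureType.eq_zero_of_commute_adj (Or.inr (Or.inl hb)) (commute_adj b hb')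
    (by rw [← hdec, ← map_mul, hzz, map_zero])
  exact inclH_injective (by rw [hdec, hb0, map_zero])

theorem center_isReduced (D : HodgeAlgebraData A) : IsReduced (Subring.center A) :=
  (isReduced_iff_pow_one_lt 2 one_lt_two).mpr fun z hz ↦ Subtype.ext <|
    D.eq_zero_of_mem_center_of_mul_self_eq_zero z.2 (by rw [← sq, ← Subring.coe_pow, hz]; rfl)

end HodgeAlgebraData

end HodgeAlgebra

theorem exists_intermediateField_algEquiv (K L E : Type*) [Field K] [Field L] [IsAlgClosed L]
    [Algebra K L] [Field E] [Algebra K E] [FiniteDimensional K E] :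
    ∃ F : IntermediateField K L, FiniteDimensional K F ∧ Nonempty (E ≃ₐ[K] F) := by
  let φ : E →ₐ[K] L := IsAlgClosed.lift
  let e : E ≃ₐ[K] φ.fieldRange := AlgEquiv.ofInjectiveField φ
  exact ⟨φ.fieldRange, e.toLinearEquiv.finiteDimensional, ⟨e⟩⟩

theorem exists_ringEquiv_pi_intermediateField (K L R : Type*) [Field K] [Field L] [IsAlgClosed L]
    [Algebra K L] [CommRing R] [Algebra K R] [FiniteDimensional K R] [IsReduced R] :
    ∃ (n : ℕ) (F : Fin n → IntermediateField K L),
      (∀ i, FiniteDimensional K (F i)) ∧ Nonempty (R ≃+* ((i : Fin n) → F i)) := by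
  have : IsArtinianRing R := isArtinian_of_tower K inferInstance
  have hfield (I : MaximalSpectrum R) :
      ∃ F : IntermediateField K L, FiniteDimensional K F ∧ Nonempty ((R ⧸ I.asIdeal) ≃ₐ[K] F) :=
    letI := Ideal.Quotient.field I.asIdeal
    have : FiniteDimensional K (R ⧸ I.asIdeal) :=
      Module.Finite.of_surjective (Ideal.Quotient.mkₐ K I.asIdeal).toLinearMap
        (Ideal.Quotient.mkₐ_surjective K I.asIdeal)
    exists_intermediateField_algEquiv K L _
  choose F hF e using hfield
  obtain ⟨n, ⟨ε⟩⟩ := Finite.exists_equiv_fin (MaximalSpectrum R)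
  exact ⟨n, fun i ↦ F (ε.symm i), fun i ↦ hF _,
    ⟨(IsArtinianRing.equivPi R).toRingEquiv.trans <|
      (RingEquiv.piCongrRight fun I ↦ (e I).some.toRingEquiv).trans <|
      RingEquiv.piCongrLeft' (fun I ↦ F I) ε⟩⟩

/-- The center `K := Z(H)` of the `ℚ`-algebra `H` is a reduced ring (it has
no nonzero nilpotents); consequently `K` is isomorphic as a ring to a finite product of
number fields (realized here as finite-dimensional intermediate fields of `ℚ ⊆ ℂ`). -/
theorem center_reduced_product_of_number_fields (D : HodgeAlgebraData H) :
    IsReduced (Subring.center H) ∧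
    ∃ (n : ℕ) (F : Fin n → IntermediateField ℚ ℂ),
      (∀ i, FiniteDimensional ℚ (F i)) ∧
      Nonempty ((Subring.center H) ≃+* ((i : Fin n) → F i)) := by
  have hred := D.center_isReduced
  have e : Subalgebra.center ℚ H ≃+* Subring.center H :=
    RingEquiv.subringCongr (Subalgebra.center_toSubring ℚ H)
  have : IsReduced (Subalgebra.center ℚ H) :=
    isReduced_of_injective (e : Subalgebra.center ℚ H →+* Subring.center H) e.injective
  obtain ⟨n, F, hF, ⟨e'⟩⟩ := exists_ringEquiv_pi_intermediateField ℚ ℂ (Subalgebra.center ℚ H)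
  exact ⟨hred, n, F, hF, ⟨e.symm.trans e'⟩⟩
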